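/- arXiv:2401.13788 — 2 statements merged into one kernel-verified Lean document; each statement's English description precedes it below -/
import Mathlib

section
/- A monomial ideal I ⊆ k[x_1,...,x_n] is quasi-stable (possesses a finite Pommaret basis) if and only if for every monomial x^μ ∈ I and all indices 1 ≤ i < j ≤ n with x_i dividing x^μ, there exists an integer t > 0 such that x_j^t · x^μ / x_i^{μ_i} ∈ I. -/
/-- The class of an exponent vector: the least index with nonzero exponent. -/
noncomputable def cls {n : ℕ} (μ : Fin n → ℕ) : ℕ := sInf {i : ℕ | ∃ hi : i < n, μ ⟨i, hi⟩ ≠ 0}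

/-- Pommaret involutive divisibility: `μ` divides `ν` and the quotient only
involves the multiplicative variables `x_1, …, x_{cls μ}` of `μ`. -/
def InvDvd {n : ℕ} (μ ν : Fin n → ℕ) : Prop :=
  (∀ i, μ i ≤ ν i) ∧ ∀ i : Fin n, cls μ < (i : ℕ) → ν i = μ i

/-- Membership of a monomial in the monomial ideal generated by `H`. -/
def MemMonIdeal {n : ℕ} (H : Set (Fin n → ℕ)) (ν : Fin n → ℕ) : Prop :=
  ∃ h ∈ H, ∀ i, h i ≤ ν i

/-- A set of exponent vectors is (the set of monomials of) a monomial ideal if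
it is closed under taking monomial multiples. -/
def IsMonIdeal {n : ℕ} (S : Set (Fin n → ℕ)) : Prop :=
  ∀ μ ∈ S, ∀ ν : Fin n → ℕ, (∀ i, μ i ≤ ν i) → ν ∈ S

/-- The elementary move of stability: replace x^μ by x^μ · x_i / x_{cls μ}. -/
noncomputable def bump {n : ℕ} (μ : Fin n → ℕ) (i : Fin n) : Fin n → ℕ :=
  fun j => if (j : ℕ) = cls μ then μ j - 1 else if j = i then μ j + 1 else μ j

/-- A monomial ideal is stable if for every monomial x^μ in it and every index
i greater than the class of μ, the monomial x^μ · x_i / x_{cls μ} is in it. -/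
def IsStable {n : ℕ} (S : Set (Fin n → ℕ)) : Prop :=
  ∀ μ ∈ S, ∀ i : Fin n, cls μ < (i : ℕ) → bump μ i ∈ S

/-- The minimal monomial generating set: monomials of S not properly divisible
by another monomial of S. -/
def MinGen {n : ℕ} (S : Set (Fin n → ℕ)) : Set (Fin n → ℕ) :=
  {g | g ∈ S ∧ ∀ ν ∈ S, (∀ i, ν i ≤ g i) → ν = g}

/-- A monomial ideal is quasi-stable if it possesses a finite Pommaret basis:
a finite generating set H such that every monomial of the ideal has exactly
one involutive divisor in H. -/
def IsQuasiStable {n : ℕ} (S : Set (Fin n → ℕ)) : Prop :=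
  ∃ H : Finset (Fin n → ℕ), (∀ ν, ν ∈ S ↔ MemMonIdeal ↑H ν) ∧
    ∀ ν ∈ S, ∃! h, h ∈ H ∧ InvDvd h ν

/-!
(⇒) Multiply `x^μ` by a power of `x_j` exceeding the `x_j`-degree of every element of the
Pommaret basis `H`. The involutive divisor in `H` of this monomial must then have class `≥ j`,
so it is free of `x_i` and divides `x_j^t · x^μ / x_i^{μ_i}`.

(⇐) The only candidate basis is the set of `ν ∈ S` with `x^ν / x_{cls ν} ∉ S`. Every monomial of
`S` reaches it by repeatedly dividing by the variable of least index, which is an involutive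
division; two involutive divisors of a monomial are involutively comparable, and an element of the
candidate basis has no proper involutive divisor in `S`, which gives uniqueness. For finiteness,
if a minimal generator `g` of `S` divides a basis element `h`, then `g` involves `x_{cls h}` and
`h ≤ g + ∑ t`, where the `t` are the exponents that the hypothesis provides for `g`; by Dickson's
lemma there are finitely many minimal generators.
-/

section

variable {n : ℕ}

lemma cls_le_of_ne_zero {ν : Fin n → ℕ} {l : Fin n} (h : ν l ≠ 0) : cls ν ≤ l :=
  Nat.sInf_le ⟨l.2, h⟩

lemma apply_eq_zero_of_lt_cls {ν : Fin n → ℕ} {l : Fin n} (h : (l : ℕ) < cls ν) : ν l = 0 := by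
  by_contra hne
  exact (cls_le_of_ne_zero hne).not_gt h

lemma exists_cls_eq {ν : Fin n → ℕ} (hν : ν ≠ 0) : ∃ c : Fin n, (c : ℕ) = cls ν ∧ ν c ≠ 0 := by
  obtain ⟨l, hl⟩ := Function.ne_iff.mp hν
  obtain ⟨hc, hνc⟩ := Nat.sInf_mem (s := {i : ℕ | ∃ hi : i < n, ν ⟨i, hi⟩ ≠ 0}) ⟨l, l.2, hl⟩
  exact ⟨⟨cls ν, hc⟩, rfl, hνc⟩

lemma cls_le_cls_of_le {μ ν : Fin n → ℕ} (hle : μ ≤ ν) (hμ : μ ≠ 0) : cls ν ≤ cls μ := by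
  obtain ⟨c, hc, hμc⟩ := exists_cls_eq hμ
  have hνc : ν c ≠ 0 := by have : μ c ≤ ν c := hle c; omega
  exact hc ▸ cls_le_of_ne_zero hνc

namespace InvDvd

lemma refl (ν : Fin n → ℕ) : InvDvd ν ν :=
  ⟨fun _ => le_rfl, fun _ _ => rfl⟩

lemma trans {ρ μ ν : Fin n → ℕ} (h₁ : InvDvd ρ μ) (hρ : ρ ≠ 0) (h₂ : InvDvd μ ν) :
    InvDvd ρ ν :=
  ⟨fun i => (h₁.1 i).trans (h₂.1 i),
    fun i hi => (h₂.2 i ((cls_le_cls_of_le h₁.1 hρ).trans_lt hi)).trans (h₁.2 i hi)⟩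

lemma of_cls_le {g h ν : Fin n → ℕ} (hg : InvDvd g ν) (hh : InvDvd h ν) (hcls : cls h ≤ cls g)
    (hc : ∀ l : Fin n, (l : ℕ) = cls h → g l ≤ h l) : InvDvd g h := by
  refine ⟨fun l => ?_, fun l hl => (hh.2 l (hcls.trans_lt hl)).symm.trans (hg.2 l hl)⟩
  rcases lt_trichotomy (l : ℕ) (cls h) with hl | hl | hl
  · rw [apply_eq_zero_of_lt_cls (hl.trans_le hcls)]
    exact Nat.zero_le _
  · exact hc l hl
  · rw [← hh.2 l hl]
    exact hg.1 l

lemma total {g h ν : Fin n → ℕ} (hg0 : g ≠ 0) (hh0 : h ≠ 0) (hg : InvDvd g ν)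
    (hh : InvDvd h ν) : InvDvd g h ∨ InvDvd h g := by
  wlog hcls : cls h ≤ cls g generalizing g h
  · exact (this hh0 hg0 hh hg (le_of_not_ge hcls)).symm
  obtain ⟨c, hc, hhc⟩ := exists_cls_eq hh0
  have hat_c : ∀ l : Fin n, (l : ℕ) = cls h → l = c := fun l hl => Fin.ext (hl.trans hc.symm)
  rcases le_total (g c) (h c) with hle | hle
  · exact .inl (of_cls_le hg hh hcls fun l hl => hat_c l hl ▸ hle)
  · have hcls' : cls g ≤ cls h := hc ▸ cls_le_of_ne_zero (by omega)
    exact .inr (of_cls_le hh hg hcls' fun l hl =>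
      hat_c l (hl.trans (hcls.antisymm hcls').symm) ▸ hle)

lemma apply_lt_of_ne {g h : Fin n → ℕ} {c : Fin n} (hgh : InvDvd g h) (hne : g ≠ h)
    (hc : (c : ℕ) = cls h) (hhc : h c ≠ 0) : g c < h c := by
  by_contra! hge
  have hcls : cls g ≤ cls h := hc ▸ cls_le_of_ne_zero (by omega)
  refine hne (le_antisymm hgh.1 fun l => ?_)
  show h l ≤ g l
  rcases lt_trichotomy (l : ℕ) (cls h) with hl | hl | hl
  · rw [apply_eq_zero_of_lt_cls hl]
    exact Nat.zero_le _
  · obtain rfl : l = c := Fin.ext (hl.trans hc.symm)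
    exact hge
  · exact (hgh.2 l (hcls.trans_lt hl)).le

end InvDvd

/-- `x_j^t · x^μ / x_i^{μ_i}`. -/
def exchange (μ : Fin n → ℕ) (i j : Fin n) (t : ℕ) : Fin n → ℕ :=
  fun l => if l = i then 0 else if l = j then μ l + t else μ l

lemma exists_exchange_mem {S : Set (Fin n → ℕ)} (hS : IsMonIdeal S) {H : Finset (Fin n → ℕ)}
    (hH : ∀ h ∈ H, h ∈ S) (hdiv : ∀ ν ∈ S, ∃ h ∈ H, InvDvd h ν) {μ : Fin n → ℕ} (hμ : μ ∈ S)
    {i j : Fin n} (hij : i < j) : ∃ t, 0 < t ∧ exchange μ i j t ∈ S := by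
  set t := H.sup (· j) + 1
  set ν := Function.update μ j (μ j + t)
  have hν : ν ∈ S := hS μ hμ ν fun l => by
    simp only [ν, Function.update_apply]
    split_ifs with hl
    · subst hl; omega
    · exact le_rfl
  obtain ⟨h, hhH, hhν⟩ := hdiv ν hν
  have hj : (j : ℕ) ≤ cls h := by
    by_contra hlt
    have hνj : ν j = h j := hhν.2 j (not_le.mp hlt)
    have hhj : h j ≤ H.sup (· j) := Finset.le_sup (f := (· j)) hhH
    simp only [ν, Function.update_self] at hνj
    omega
  refine ⟨t, Nat.succ_pos _, hS h (hH h hhH) _ fun l => ?_⟩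
  rcases eq_or_ne l i with rfl | hli
  · simp [exchange, apply_eq_zero_of_lt_cls ((Fin.lt_def.mp hij).trans_le hj)]
  have hhl := hhν.1 l
  rcases eq_or_ne l j with rfl | hlj
  · simpa [exchange, ν, hli] using hhl
  · simpa [exchange, ν, hli, hlj] using hhl

/-- `x^ν / x_{cls ν}`. -/
noncomputable def divCls (ν : Fin n → ℕ) : Fin n → ℕ :=
  fun l => if (l : ℕ) = cls ν then ν l - 1 else ν l

lemma divCls_apply_of_ne {ν : Fin n → ℕ} {l : Fin n} (h : (l : ℕ) ≠ cls ν) :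
    divCls ν l = ν l :=
  if_neg h

lemma divCls_le (ν : Fin n → ℕ) : divCls ν ≤ ν := by
  intro l
  simp only [divCls]
  split_ifs <;> omega

lemma divCls_lt {ν : Fin n → ℕ} (hν : ν ≠ 0) : divCls ν < ν := by
  obtain ⟨c, hc, hνc⟩ := exists_cls_eq hν
  refine Pi.lt_def.mpr ⟨divCls_le ν, c, ?_⟩
  simp only [divCls, if_pos hc]
  omega

lemma le_divCls {g ν : Fin n → ℕ} {c : Fin n} (hc : (c : ℕ) = cls ν) (hle : g ≤ ν)
    (hlt : g c < ν c) : g ≤ divCls ν := by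
  intro l
  simp only [divCls]
  split_ifs with hl
  · obtain rfl : l = c := Fin.ext (hl.trans hc.symm)
    omega
  · exact hle l

lemma invDvd_divCls {ν : Fin n → ℕ} (h : divCls ν ≠ 0) : InvDvd (divCls ν) ν := by
  refine ⟨divCls_le ν, fun i hi => (divCls_apply_of_ne fun hic => ?_).symm⟩
  obtain ⟨c, hc, hνc⟩ := exists_cls_eq h
  have hcν : (c : ℕ) < cls ν := by omega
  exact hνc ((divCls_apply_of_ne hcν.ne).trans (apply_eq_zero_of_lt_cls hcν))

def pommaretBasis (S : Set (Fin n → ℕ)) : Set (Fin n → ℕ) :=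
  {ν | ν ∈ S ∧ divCls ν ∉ S}

variable {S : Set (Fin n → ℕ)}

lemma ne_zero_of_mem_pommaretBasis {h : Fin n → ℕ} (hh : h ∈ pommaretBasis S) : h ≠ 0 := by
  rintro rfl
  refine hh.2 ?_
  convert hh.1 using 1
  funext l
  simp [divCls]

lemma exists_mem_pommaretBasis_invDvd (h0 : (0 : Fin n → ℕ) ∉ S) {ν : Fin n → ℕ} (hν : ν ∈ S) :
    ∃ h ∈ pommaretBasis S, InvDvd h ν := by
  induction ν using WellFoundedLT.induction with
  | _ ν ih =>
    by_cases hdiv : divCls ν ∈ S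
    · obtain ⟨h, hh, hhd⟩ := ih _ (divCls_lt (ne_of_mem_of_not_mem hν h0)) hdiv
      exact ⟨h, hh, InvDvd.trans hhd (ne_zero_of_mem_pommaretBasis hh)
        (invDvd_divCls (ne_of_mem_of_not_mem hdiv h0))⟩
    · exact ⟨ν, ⟨hν, hdiv⟩, InvDvd.refl ν⟩

lemma apply_cls_le_of_mem_pommaretBasis (hS : IsMonIdeal S) {g h : Fin n → ℕ} {c : Fin n}
    (hh : h ∈ pommaretBasis S) (hc : (c : ℕ) = cls h) (hg : g ∈ S) (hgh : g ≤ h) : h c ≤ g c := by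
  by_contra! hlt
  exact hh.2 (hS g hg _ (le_divCls hc hgh hlt))

lemma InvDvd.eq_of_mem_pommaretBasis (hS : IsMonIdeal S) {g h : Fin n → ℕ} (hgh : InvDvd g h)
    (hg : g ∈ S) (hh : h ∈ pommaretBasis S) : g = h := by
  obtain ⟨c, hc, hhc⟩ := exists_cls_eq (ne_zero_of_mem_pommaretBasis hh)
  by_contra hne
  exact (hgh.apply_lt_of_ne hne hc hhc).not_ge
    (apply_cls_le_of_mem_pommaretBasis hS hh hc hg hgh.1)

lemma eq_of_invDvd_of_mem_pommaretBasis (hS : IsMonIdeal S) {h h' ν : Fin n → ℕ}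
    (hh : h ∈ pommaretBasis S) (hh' : h' ∈ pommaretBasis S) (hhν : InvDvd h ν)
    (hh'ν : InvDvd h' ν) : h = h' := by
  rcases InvDvd.total (ne_zero_of_mem_pommaretBasis hh) (ne_zero_of_mem_pommaretBasis hh')
    hhν hh'ν with hd | hd
  · exact hd.eq_of_mem_pommaretBasis hS hh.1 hh'
  · exact (hd.eq_of_mem_pommaretBasis hS hh'.1 hh).symm

lemma le_add_of_mem_pommaretBasis (hS : IsMonIdeal S) {g h : Fin n → ℕ} {t : Fin n → Fin n → ℕ}
    (hg : g ∈ S) (ht : ∀ i j, i < j → g i ≠ 0 → exchange g i j (t i j) ∈ S)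
    (hh : h ∈ pommaretBasis S) (hgh : g ≤ h) : h ≤ g + fun l => ∑ i, t i l := by
  obtain ⟨c, hc, hhc⟩ := exists_cls_eq (ne_zero_of_mem_pommaretBasis hh)
  have hhg : h c ≤ g c := apply_cls_le_of_mem_pommaretBasis hS hh hc hg hgh
  intro l
  rcases lt_trichotomy l c with hl | rfl | hl
  · rw [apply_eq_zero_of_lt_cls (hc ▸ Fin.lt_def.mp hl : (l : ℕ) < cls h)]
    exact Nat.zero_le _
  · exact hhg.trans (Nat.le_add_right _ _)
  · have hlt : h l < g l + t c l := by
      by_contra! hle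
      have hexle : exchange g c l (t c l) ≤ h := by
        intro k
        simp only [exchange]
        split_ifs with hkc hkl
        · exact Nat.zero_le _
        · exact hkl ▸ hle
        · exact hgh k
      have := apply_cls_le_of_mem_pommaretBasis hS hh hc (ht c l hl (by omega)) hexle
      simp only [exchange, if_true] at this
      omega
    calc h l ≤ g l + t c l := hlt.le
      _ ≤ g l + ∑ i, t i l := by
        gcongr
        exact Finset.single_le_sum (f := (t · l)) (fun _ _ => Nat.zero_le _) (Finset.mem_univ c)

lemma pommaretBasis_finite (hS : IsMonIdeal S)
    (hcond : ∀ μ ∈ S, ∀ i j : Fin n, i < j → μ i ≠ 0 → ∃ t, exchange μ i j t ∈ S) :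
    (pommaretBasis S).Finite := by
  choose! t ht using hcond
  have hmin : {g | Minimal (· ∈ S) g}.Finite :=
    WellQuasiOrderedLE.finite_of_isAntichain (setOfPred_minimal_antichain _)
  refine (hmin.biUnion fun g _ => Set.finite_Iic (g + fun l => ∑ i, t g i l)).subset
    fun h hh => ?_
  obtain ⟨g, hgh, hg⟩ := exists_minimal_le_of_wellFoundedLT (· ∈ S) h hh.1
  exact Set.mem_biUnion hg (le_add_of_mem_pommaretBasis hS hg.1 (ht g hg.1) hh hgh)

end

/-- A monomial ideal is quasi-stable if and only if for every monomial x^μ in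
it and all indices i < j with x_i dividing x^μ, there is an integer t > 0 such
that x_j^t · x^μ / x_i^{μ_i} lies in the ideal. -/
theorem isQuasiStable_iff {n : ℕ} (S : Set (Fin n → ℕ))
    (hS : IsMonIdeal S) (h0 : (0 : Fin n → ℕ) ∉ S) :
    IsQuasiStable S ↔
      ∀ μ ∈ S, ∀ i j : Fin n, i < j → μ i ≠ 0 →
        ∃ t : ℕ, 0 < t ∧
          (fun l => if l = i then 0 else if l = j then μ l + t else μ l) ∈ S := by
  constructor
  · rintro ⟨H, hgen, huniq⟩ μ hμ i j hij -
    exact exists_exchange_mem hS (fun h hh => (hgen h).2 ⟨h, hh, fun _ => le_rfl⟩)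
      (fun ν hν => (huniq ν hν).exists) hμ hij
  · intro hcond
    have hfin := pommaretBasis_finite hS fun μ hμ i j hij hi =>
      (hcond μ hμ i j hij hi).imp fun _ => And.right
    refine ⟨hfin.toFinset, fun ν => ?_, fun ν hν => ?_⟩
    · simp only [MemMonIdeal, Set.Finite.coe_toFinset]
      refine ⟨fun hν => ?_, fun ⟨h, hh, hhν⟩ => hS h hh.1 ν hhν⟩
      obtain ⟨h, hh, hhν⟩ := exists_mem_pommaretBasis_invDvd h0 hν
      exact ⟨h, hh, hhν.1⟩
    · obtain ⟨h, hh, hhν⟩ := exists_mem_pommaretBasis_invDvd h0 hν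
      refine ⟨h, ⟨hfin.mem_toFinset.2 hh, hhν⟩, fun h' ⟨hh', hh'ν⟩ => ?_⟩
      exact eq_of_invDvd_of_mem_pommaretBasis hS (hfin.mem_toFinset.1 hh') hh hh'ν hhν
end

section
/- Let H = {h_1,...,h_r} be a P-ordered Pommaret basis of a quasi-stable monomial ideal I (sorted first by class, then lexicographically within each class). Then for each α < r, the colon ideal ⟨h_{α+1},...,h_r⟩ : ⟨h_α⟩ equals the ideal generated by the non-multiplicative variables of h_α, i.e., ⟨x_{cls(h_α)+1},...,x_n⟩. -/
/-- Lexicographic comparison of exponent vectors: μ < ν if at the largest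
index where they differ, the exponent of μ is smaller. -/
def LexLt {n : ℕ} (μ ν : Fin n → ℕ) : Prop :=
  ∃ k : Fin n, μ k < ν k ∧ ∀ j : Fin n, k < j → μ j = ν j

/-- A P-ordering: sorted first by class, then lexicographically within each
class. -/
def POrdered {n r : ℕ} (h : Fin r → (Fin n → ℕ)) : Prop :=
  ∀ a b : Fin r, a < b →
    cls (h a) < cls (h b) ∨ (cls (h a) = cls (h b) ∧ LexLt (h a) (h b))


/-! A later basis element `h_β` cannot divide `ν · h_α` when `ν` involves only multiplicative
variables of `h_α`: if the class of `h_β` is larger, `h_β` divides the non-multiplicative part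
of `h_α`, whose involutive divisor in the basis would be a second involutive divisor of `h_α`;
if the classes are equal, the lexicographic comparison forces `h_α` to divide `h_β`
involutively. Conversely, the involutive divisor of `x_i · h_α` for a non-multiplicative `x_i`
can neither be `h_α` nor precede it. -/

/-- The cones `g · k[x_1, …, x_{cls g}]`, `g ∈ H`, partition the monomials of `⟨H⟩`. -/
def IsPommaretBasis {n : ℕ} (H : Set (Fin n → ℕ)) : Prop :=
  ∀ ν, MemMonIdeal H ν → ∃! g, g ∈ H ∧ InvDvd g ν

def PLt {n : ℕ} (μ ν : Fin n → ℕ) : Prop :=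
  cls μ < cls ν ∨ (cls μ = cls ν ∧ LexLt μ ν)

section Cls

variable {n : ℕ} {μ : Fin n → ℕ}

lemma cls_le_of_ne_zero_s14 {i : Fin n} (hi : μ i ≠ 0) : cls μ ≤ i :=
  Nat.sInf_le ⟨i.isLt, hi⟩

lemma eq_zero_of_lt_cls {i : Fin n} (hi : (i : ℕ) < cls μ) : μ i = 0 := by
  by_contra hne
  exact (cls_le_of_ne_zero_s14 hne).not_gt hi

lemma cls_zero : cls (0 : Fin n → ℕ) = 0 := by
  simp [cls]

lemma exists_apply_cls_ne_zero (hμ : μ ≠ 0) : ∃ hlt : cls μ < n, μ ⟨cls μ, hlt⟩ ≠ 0 := by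
  obtain ⟨i, hi⟩ := Function.ne_iff.mp hμ
  exact Nat.sInf_mem (s := {i : ℕ | ∃ hi : i < n, μ ⟨i, hi⟩ ≠ 0}) ⟨i, i.isLt, hi⟩

lemma le_cls_of_forall_lt {c : ℕ} (hμ : μ ≠ 0) (h : ∀ i : Fin n, (i : ℕ) < c → μ i = 0) :
    c ≤ cls μ := by
  obtain ⟨hlt, hne⟩ := exists_apply_cls_ne_zero hμ
  by_contra! hc
  exact hne (h _ hc)

end Cls

section InvDvd

variable {n : ℕ} {g μ : Fin n → ℕ}

lemma InvDvd.refl_s14 (μ : Fin n → ℕ) : InvDvd μ μ :=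
  ⟨fun _ => le_rfl, fun _ _ => rfl⟩

lemma InvDvd.cls_le (hg : InvDvd g μ) : cls μ ≤ cls g := by
  by_contra! hlt
  have hμ : μ ≠ 0 := by
    rintro rfl
    simp [cls_zero] at hlt
  obtain ⟨hμn, hμcls⟩ := exists_apply_cls_ne_zero hμ
  have hg0 : g ≠ 0 := by
    rintro rfl
    exact hμcls (hg.2 _ hlt)
  obtain ⟨hgn, hgcls⟩ := exists_apply_cls_ne_zero hg0
  have : μ ⟨cls g, hgn⟩ ≠ 0 := fun h0 => hgcls (Nat.le_zero.mp (h0 ▸ hg.1 _))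
  exact (cls_le_of_ne_zero_s14 this).not_gt hlt

lemma not_invDvd_add_single_self {i : Fin n} (hi : cls μ < i) :
    ¬ InvDvd μ (μ + Pi.single i 1) := by
  intro h
  simpa using h.2 i hi

lemma not_pLt_of_invDvd_add_single {i : Fin n} (hi : cls μ < i)
    (hg : InvDvd g (μ + Pi.single i 1)) : ¬ PLt g μ := by
  rintro (hcls | ⟨hcls, k, hgk, habove⟩)
  · have hne : μ + Pi.single i 1 ≠ 0 := fun h0 => by simpa using congrFun h0 i
    have hlow : ∀ j : Fin n, (j : ℕ) < cls μ → (μ + Pi.single i 1 : Fin n → ℕ) j = 0 :=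
      fun j hj => by
        have hji : j ≠ i := fun h => by subst h; omega
        simp [eq_zero_of_lt_cls hj, hji]
    have := (le_cls_of_forall_lt hne hlow).trans hg.cls_le
    omega
  · have hgi : g i = μ i + 1 := by simpa using (hg.2 i (hcls ▸ hi)).symm
    have hik : i ≤ k := not_lt.mp fun hki => by simp [habove i hki] at hgi
    have hgk' := hg.2 k (by rw [hcls]; exact lt_of_lt_of_le hi hik)
    have : μ k ≤ g k := by rw [← hgk']; simp
    omega

end InvDvd

namespace IsPommaretBasis

variable {n : ℕ} {H : Set (Fin n → ℕ)} {f g : Fin n → ℕ}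

lemma eq_of_invDvd (hH : IsPommaretBasis H) (hf : f ∈ H) (hg : g ∈ H) (hfg : InvDvd f g) :
    f = g :=
  (hH g ⟨g, hg, fun _ => le_rfl⟩).unique ⟨hf, hfg⟩ ⟨hg, .refl g⟩

lemma exists_lt_of_cls_lt (hH : IsPommaretBasis H) (hf : f ∈ H) (hg : g ∈ H)
    (hcls : cls f < cls g) : ∃ i : Fin n, cls f < i ∧ f i < g i := by
  by_contra! hle
  set ψ : Fin n → ℕ := fun i => if cls f < (i : ℕ) then f i else 0 with hψ
  have hgψ : ∀ i, g i ≤ ψ i := fun i => by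
    by_cases hi : cls f < (i : ℕ)
    · simpa [hψ, hi] using hle i hi
    · simp [hψ, hi, eq_zero_of_lt_cls (show (i : ℕ) < cls g by omega)]
  have hψ0 : ψ ≠ 0 := by
    intro h0
    have : g = 0 := funext fun i => Nat.le_zero.mp (by simpa [h0] using hgψ i)
    simp [this, cls_zero] at hcls
  obtain ⟨e, ⟨he, heψ⟩, -⟩ := hH ψ ⟨g, hg, hgψ⟩
  -- `cls e > cls f`, so `e` also divides `f` involutively
  have hcls_e : cls f < cls e :=
    (le_cls_of_forall_lt hψ0 fun i hi => if_neg (by omega)).trans heψ.cls_le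
  have hef : InvDvd e f := by
    refine ⟨fun i => (heψ.1 i).trans ?_, fun i hi => ?_⟩
    · simp only [hψ]; split_ifs <;> simp
    · rw [← heψ.2 i hi]; exact (if_pos (by omega)).symm
  rw [hH.eq_of_invDvd he hf hef] at hcls_e
  exact hcls_e.false

lemma exists_lt_of_lexLt (hH : IsPommaretBasis H) (hf : f ∈ H) (hg : g ∈ H)
    (hcls : cls f = cls g) (hlex : LexLt f g) : ∃ i : Fin n, cls f < i ∧ f i < g i := by
  obtain ⟨k, hk, habove⟩ := hlex
  by_contra! hle
  have hkf : (k : ℕ) = cls f :=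
    le_antisymm (not_lt.mp fun h => (hle k h).not_gt hk) (hcls ▸ cls_le_of_ne_zero_s14 (by omega))
  have hfg : InvDvd f g := by
    refine ⟨fun i => ?_, fun i hi => (habove i (Fin.lt_def.mpr (by omega))).symm⟩
    rcases lt_trichotomy i k with hik | rfl | hki
    · simp [eq_zero_of_lt_cls (show (i : ℕ) < cls f by rw [← hkf]; exact hik)]
    · exact hk.le
    · exact (habove i hki).le
  exact hk.ne (congrFun (hH.eq_of_invDvd hf hg hfg) k)

lemma exists_lt_of_pLt (hH : IsPommaretBasis H) (hf : f ∈ H) (hg : g ∈ H) (hfg : PLt f g) :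
    ∃ i : Fin n, cls f < i ∧ f i < g i := by
  rcases hfg with hcls | ⟨hcls, hlex⟩
  exacts [hH.exists_lt_of_cls_lt hf hg hcls, hH.exists_lt_of_lexLt hf hg hcls hlex]

end IsPommaretBasis

theorem colon_ideal_eq_nonmult_vars_general {n r : ℕ} (h : Fin r → (Fin n → ℕ))
    (hPB : ∀ ν, MemMonIdeal (Set.range h) ν →
      ∃! g, g ∈ Set.range h ∧ InvDvd g ν)
    (hord : POrdered h) (α : Fin r) :
    ∀ ν : Fin n → ℕ,
      (∃ β : Fin r, α < β ∧ ∀ i, h β i ≤ ν i + h α i) ↔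
      ∃ i : Fin n, cls (h α) < (i : ℕ) ∧ 0 < ν i := by
  have hH : IsPommaretBasis (Set.range h) := hPB
  intro ν
  constructor
  · rintro ⟨β, hαβ, hdvd⟩
    obtain ⟨i, hi, hlt⟩ := hH.exists_lt_of_pLt ⟨α, rfl⟩ ⟨β, rfl⟩ (hord α β hαβ)
    exact ⟨i, hi, by have := hdvd i; omega⟩
  · rintro ⟨i, hi, hνi⟩
    obtain ⟨_, ⟨⟨β, rfl⟩, hβ⟩, -⟩ :=
      hH (h α + Pi.single i 1) ⟨h α, ⟨α, rfl⟩, fun j => by simp⟩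
    refine ⟨β, ?_, fun j => (hβ.1 j).trans ?_⟩
    · rcases lt_trichotomy α β with hαβ | rfl | hβα
      · exact hαβ
      · exact absurd hβ (not_invDvd_add_single_self hi)
      · exact absurd (hord β α hβα) (not_pLt_of_invDvd_add_single hi hβ)
    · rcases eq_or_ne j i with rfl | hji
      · simp only [Pi.add_apply, Pi.single_eq_same]; omega
      · simp [hji]

/-- For a P-ordered Pommaret basis h_1, …, h_r of a quasi-stable ideal, the
colon ideal ⟨h_{α+1}, …, h_r⟩ : ⟨h_α⟩ is generated by the non-multiplicative
variables of h_α (stated via membership of monomials). -/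
theorem colon_ideal_eq_nonmult_vars {n r : ℕ} (h : Fin r → (Fin n → ℕ))
    (hPB : ∀ ν, MemMonIdeal (Set.range h) ν →
      ∃! g, g ∈ Set.range h ∧ InvDvd g ν)
    (hord : POrdered h) (α : Fin r) (hα : (α : ℕ) + 1 < r) :
    ∀ ν : Fin n → ℕ,
      (∃ β : Fin r, α < β ∧ ∀ i, h β i ≤ ν i + h α i) ↔
      ∃ i : Fin n, cls (h α) < (i : ℕ) ∧ 0 < ν i :=
  colon_ideal_eq_nonmult_vars_general h hPB hord α
end
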